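/- arXiv:quant-ph/9908050 — 5 statements merged into one kernel-verified Lean document; each statement's English description precedes it below -/
import Mathlib

section
/- (Carathéodory bound on pure-state ensemble length.) Let N = n₁⋯n_p. Every separable state, i.e. every A : Matrix I I ℂ belonging to the convex hull (over ℝ) of the set of tensor products of density matrices, can be written as a convex combination of at most N² pure product states: A = Σ_{j=1}^{N²} λⱼ · Pⱼ with λⱼ ≥ 0, Σ λⱼ = 1, and each Pⱼ a tensor product of rank-one density matrices. -/
open scoped ComplexOrder
open MeasureTheory

/-- A density matrix: positive semidefinite (hence Hermitian) with trace 1. -/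
def IsDensityMatrix {m : Type*} [Fintype m] [DecidableEq m] (A : Matrix m m ℂ) : Prop :=
  A.PosSemidef ∧ A.trace = 1

/-- A pure density matrix: a density matrix of rank one. -/
def IsPureDensityMatrix {m : Type*} [Fintype m] [DecidableEq m] (A : Matrix m m ℂ) : Prop :=
  IsDensityMatrix A ∧ A.rank = 1

/-- Tensor (Kronecker) product of the matrices `B i` over all `p` particles. -/
def prodMat {p : ℕ} (n : Fin p → ℕ) (B : ∀ i, Matrix (Fin (n i)) (Fin (n i)) ℂ) :
    Matrix (∀ i, Fin (n i)) (∀ i, Fin (n i)) ℂ :=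
  fun x y => ∏ i, B i (x i) (y i)

/-- `Σ^k(n₁,…,n_p)`: separable states of ensemble length at most `k`. -/
def SigmaK {p : ℕ} (n : Fin p → ℕ) (k : ℕ) :
    Set (Matrix (∀ i, Fin (n i)) (∀ i, Fin (n i)) ℂ) :=
  {A | ∃ (l : Fin k → ℝ) (B : Fin k → ∀ i, Matrix (Fin (n i)) (Fin (n i)) ℂ),
    (∀ j, 0 ≤ l j) ∧ (∑ j, l j) = 1 ∧ (∀ j i, IsDensityMatrix (B j i)) ∧
    A = ∑ j, l j • prodMat n (B j)}

/-- `Σ_pure^k(n₁,…,n_p)`: separable states of pure-state ensemble length at most `k`. -/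
def SigmaPureK {p : ℕ} (n : Fin p → ℕ) (k : ℕ) :
    Set (Matrix (∀ i, Fin (n i)) (∀ i, Fin (n i)) ℂ) :=
  {A | ∃ (l : Fin k → ℝ) (B : Fin k → ∀ i, Matrix (Fin (n i)) (Fin (n i)) ℂ),
    (∀ j, 0 ≤ l j) ∧ (∑ j, l j) = 1 ∧ (∀ j i, IsPureDensityMatrix (B j i)) ∧
    A = ∑ j, l j • prodMat n (B j)}

noncomputable instance {m : Type*} [Fintype m] : NormedAddCommGroup (Matrix m m ℂ) :=
  Matrix.normedAddCommGroup

noncomputable instance {m : Type*} [Fintype m] : MeasurableSpace (Matrix m m ℂ) := borel _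

instance {m : Type*} [Fintype m] : BorelSpace (Matrix m m ℂ) := ⟨rfl⟩



open Matrix in
lemma pure_of_unit_vec {m : Type*} [Fintype m] [DecidableEq m] (u : m → ℂ)
    (hu : ∑ a, star (u a) * u a = 1) :
    IsPureDensityMatrix (vecMulVec u (star u)) := by
  have heq : vecMulVec u (star u) = replicateCol (Fin 1) u * (replicateCol (Fin 1) u)ᴴ := by
    rw [vecMulVec_eq (Fin 1), conjTranspose_replicateCol]; rfl
  have htr : (vecMulVec u (star u)).trace = 1 := by
    rw [Matrix.trace]
    simp only [diag_apply, vecMulVec_apply, Pi.star_apply]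
    rw [← hu]
    exact Finset.sum_congr rfl fun a _ => mul_comm _ _
  have hne : ∃ a, u a ≠ 0 := by
    by_contra h
    push_neg at h
    simp [h] at hu
  obtain ⟨a0, ha0⟩ := hne
  refine ⟨⟨?_, htr⟩, ?_⟩
  · rw [heq]; exact posSemidef_self_mul_conjTranspose _
  · have h1 : (vecMulVec u (star u)).rank ≤ 1 := by
      rw [heq, conjTranspose_replicateCol]
      exact (rank_mul_le_left _ _).trans ((rank_le_card_width _).trans (by simp))
    have h2 : (vecMulVec u (star u)).rank ≠ 0 := by
      intro h0
      have : FiniteDimensional ℂ (LinearMap.range (vecMulVec u (star u)).mulVecLin) :=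
        inferInstance
      rw [Matrix.rank, Submodule.finrank_eq_zero, LinearMap.range_eq_bot] at h0
      have := congrFun (LinearMap.congr_fun h0 (Pi.single a0 1)) a0
      simp [mulVecLin_apply, mulVec, dotProduct, vecMulVec_apply, Pi.single_apply,
        Finset.sum_ite_eq'] at this
      exact ha0 this
    omega

open Matrix in
lemma densityMatrix_decomp {m : Type*} [Fintype m] [DecidableEq m] {A : Matrix m m ℂ}
    (hA : IsDensityMatrix A) :
    ∃ (c : m → ℝ) (P : m → Matrix m m ℂ), (∀ k, 0 ≤ c k) ∧ (∑ k, c k) = 1 ∧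
      (∀ k, IsPureDensityMatrix (P k)) ∧ A = ∑ k, c k • P k := by
  have hH := hA.1.1
  set U : Matrix m m ℂ := (IsHermitian.eigenvectorUnitary hH : Matrix m m ℂ) with hUdef
  have hUU : star U * U = 1 := (Unitary.mem_iff.mp (IsHermitian.eigenvectorUnitary hH).2).1
  set u : m → m → ℂ := fun k a => U a k with hudef
  have hcol : ∀ k, ∑ a, star (u k a) * u k a = 1 := by
    intro k
    have h1 := congrFun (congrFun hUU k) k
    simpa [Matrix.mul_apply, Matrix.one_apply, Matrix.star_apply, hudef] using h1
  have hpure : ∀ k, IsPureDensityMatrix (vecMulVec (u k) (star (u k))) :=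
    fun k => pure_of_unit_vec _ (hcol k)
  have hdec : A = ∑ k, hH.eigenvalues k • vecMulVec (u k) (star (u k)) := by
    refine hH.spectral_theorem.trans ?_
    rw [Unitary.conjStarAlgAut_apply]
    ext a b
    simp only [Matrix.mul_apply, Matrix.sum_apply, Matrix.smul_apply, vecMulVec_apply,
      Matrix.diagonal_apply, Matrix.star_apply, Function.comp_apply, hudef, Pi.star_apply]
    refine Finset.sum_congr rfl fun k _ => ?_
    rw [Finset.sum_eq_single k (by intro j _ hj; simp [hj]) (by simp)]
    simp only [if_true, Complex.real_smul, ← hUdef]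
    rw [mul_right_comm, mul_comm]; rfl
  have hsum : (∑ k, hH.eigenvalues k) = 1 := by
    have htr := hA.2
    rw [hdec] at htr
    rw [Matrix.trace_sum] at htr
    have : ∀ k, (hH.eigenvalues k • vecMulVec (u k) (star (u k))).trace
        = ((hH.eigenvalues k : ℝ) : ℂ) := by
      intro k
      rw [Matrix.trace_smul, (hpure k).1.2]
      simp
    rw [Finset.sum_congr rfl fun k _ => this k] at htr
    exact_mod_cast htr
  exact ⟨hH.eigenvalues, _, fun k => hA.1.eigenvalues_nonneg k, hsum, hpure, hdec⟩


lemma prod_mem_hull_pure {p : ℕ} (n : Fin p → ℕ) (B : ∀ i, Matrix (Fin (n i)) (Fin (n i)) ℂ)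
    (hB : ∀ i, IsDensityMatrix (B i)) :
    prodMat n B ∈ convexHull ℝ {M | ∃ C : ∀ i, Matrix (Fin (n i)) (Fin (n i)) ℂ,
      (∀ i, IsPureDensityMatrix (C i)) ∧ M = prodMat n C} := by
  choose c P hc hcsum hP hBeq using fun i => densityMatrix_decomp (hB i)
  have key : prodMat n B
      = ∑ f : (∀ i, Fin (n i)), (∏ i, c i (f i)) • prodMat n (fun i => P i (f i)) := by
    ext x y
    simp only [prodMat, Matrix.sum_apply, Matrix.smul_apply]
    calc (∏ i, B i (x i) (y i))
        = ∏ i, ∑ k, (c i k : ℂ) * P i k (x i) (y i) := by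
          refine Finset.prod_congr rfl fun i _ => ?_
          rw [hBeq i]
          simp [Matrix.sum_apply, Complex.real_smul]
      _ = ∑ f ∈ Fintype.piFinset (fun _ => Finset.univ),
            ∏ i, (c i (f i) : ℂ) * P i (f i) (x i) (y i) := by
          rw [Finset.prod_univ_sum]
      _ = ∑ f : (∀ i, Fin (n i)), (∏ i, c i (f i)) • ∏ i, P i (f i) (x i) (y i) := by
          rw [Fintype.piFinset_univ]
          refine Finset.sum_congr rfl fun f _ => ?_
          rw [Finset.prod_mul_distrib, Complex.real_smul]
          push_cast
          rfl
  rw [key]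
  refine (convex_convexHull ℝ _).sum_mem (fun f _ => Finset.prod_nonneg fun i _ => hc i (f i))
    ?_ (fun f _ => subset_convexHull ℝ _ ?_)
  · rw [← Fintype.piFinset_univ, ← Finset.prod_univ_sum (fun _ => Finset.univ) fun i k => c i k]
    simp only [hcsum, Finset.prod_const_one]
  · exact ⟨fun i => P i (f i), fun i => hP i (f i), rfl⟩

open Module Matrix in
lemma card_le_of_affineIndependent {I : Type*} [Fintype I] [DecidableEq I] [Nonempty I]
    {ι : Type*} [Fintype ι] (z : ι → Matrix I I ℂ)
    (hz : ∀ j, (z j)ᴴ = z j ∧ (z j).trace = 1)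
    (hai : AffineIndependent ℝ z) : Fintype.card ι ≤ (Fintype.card I) ^ 2 := by
  classical
  rcases isEmpty_or_nonempty ι with hι | hι
  · simp [Fintype.card_eq_zero]
  obtain ⟨i₀⟩ := hι
  have hne : Nonempty ι := ⟨i₀⟩
  -- the submodule of Hermitian trace-zero matrices
  let V : Submodule ℝ (Matrix I I ℂ) :=
    { carrier := {M | Mᴴ = M ∧ M.trace = 0}
      add_mem' := by
        rintro M N ⟨hM1, hM2⟩ ⟨hN1, hN2⟩
        exact ⟨by rw [Matrix.conjTranspose_add, hM1, hN1], by rw [Matrix.trace_add, hM2, hN2, add_zero]⟩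
      zero_mem' := ⟨by simp, by simp⟩
      smul_mem' := by
        rintro r M ⟨hM1, hM2⟩
        refine ⟨?_, by rw [Matrix.trace_smul, hM2, smul_zero]⟩
        ext a b
        simp only [Matrix.conjTranspose_apply, Matrix.smul_apply, star_smul, star_trivial]
        rw [← Matrix.conjTranspose_apply, hM1] }
  have hmem : ∀ j : ι, z j - z i₀ ∈ V := by
    intro j
    exact ⟨by rw [Matrix.conjTranspose_sub, (hz j).1, (hz i₀).1],
      by rw [Matrix.trace_sub, (hz j).2, (hz i₀).2, sub_self]⟩
  have hli : LinearIndependent ℝ (fun j : {x : ι // x ≠ i₀} => z ↑j - z i₀) := by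
    have := (affineIndependent_iff_linearIndependent_vsub ℝ z i₀).mp hai
    simpa [vsub_eq_sub] using this
  let v : {x : ι // x ≠ i₀} → V := fun j => ⟨z ↑j - z i₀, hmem ↑j⟩
  have hliv : LinearIndependent ℝ v := by
    apply LinearIndependent.of_comp V.subtype
    exact hli
  have hcard1 : Fintype.card {x : ι // x ≠ i₀} ≤ finrank ℝ V :=
    hliv.fintype_card_le_finrank
  -- bound the dimension of V
  let e := Fintype.equivFin I
  let T : ((I × I) → ℝ) →ₗ[ℝ] ℝ :=
    { toFun := fun f => ∑ a, f (a, a)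
      map_add' := by intro f g; simp [Finset.sum_add_distrib]
      map_smul' := by intro r f; simp [Finset.mul_sum] }
  let φ : V →ₗ[ℝ] ((I × I) → ℝ) :=
    { toFun := fun M q => if e q.1 ≤ e q.2 then ((M : Matrix I I ℂ) q.1 q.2).re
        else ((M : Matrix I I ℂ) q.1 q.2).im
      map_add' := by
        intro M N; funext q
        by_cases h : e q.1 ≤ e q.2 <;> simp [h, Matrix.add_apply]
      map_smul' := by
        intro r M; funext q
        by_cases h : e q.1 ≤ e q.2 <;>
          simp [h, Matrix.smul_apply, Complex.real_smul, Complex.mul_re, Complex.mul_im] }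
  have hφinj : Function.Injective φ := by
    intro M N hMN
    have h0 : ∀ q, φ (M - N) q = 0 := by
      intro q
      have : φ (M - N) = 0 := by rw [map_sub, hMN, sub_self]
      rw [this]; rfl
    have hMN' : ((M - N : V) : Matrix I I ℂ)ᴴ = ((M - N : V) : Matrix I I ℂ) := (M - N).2.1
    have hzero : ((M - N : V) : Matrix I I ℂ) = 0 := by
      set D := ((M - N : V) : Matrix I I ℂ) with hD
      ext a b
      have herm : ∀ x y, D x y = star (D y x) := by
        intro x y; rw [← Matrix.conjTranspose_apply, hMN']
      rcases le_or_gt (e a) (e b) with hab | hab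
      · have hre : (D a b).re = 0 := by simpa [φ, hab, hD] using h0 (a, b)
        rcases eq_or_lt_of_le hab with heq | hlt
        · have hdiag : a = b := e.injective (Fin.le_antisymm hab (le_of_eq heq.symm))
          subst hdiag
          have him : (D a a).im = 0 := by
            have := herm a a
            have h2 := congrArg Complex.im this
            simp at h2
            linarith
          simp [Matrix.zero_apply]
          exact Complex.ext hre him
        · have hba : ¬ (e b ≤ e a) := not_le.mpr hlt
          have him' : (D b a).im = 0 := by simpa [φ, hba, hD] using h0 (b, a)
          have him : (D a b).im = 0 := by
            have := congrArg Complex.im (herm a b)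
            simpa [him'] using this
          simp [Matrix.zero_apply]
          exact Complex.ext hre him
      · have hba : e b ≤ e a := le_of_lt hab
        have hre' : (D b a).re = 0 := by simpa [φ, hba, hD] using h0 (b, a)
        have him : (D a b).im = 0 := by simpa [φ, not_le.mpr hab, hD] using h0 (a, b)
        have hre : (D a b).re = 0 := by
          have := congrArg Complex.re (herm a b)
          simpa [hre'] using this
        simp [Matrix.zero_apply]
        exact Complex.ext hre him
    have : (M - N : V) = 0 := Subtype.ext (by simpa using hzero)
    exact sub_eq_zero.mp this
  -- φ maps V into the kernel of T
  have hφker : ∀ M : V, φ M ∈ LinearMap.ker T := by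
    intro M
    have htr : ((M : Matrix I I ℂ).trace).re = 0 := by rw [M.2.2]; rfl
    simp only [LinearMap.mem_ker]
    show (∑ a, φ M (a, a)) = 0
    have : ∀ a : I, φ M (a, a) = ((M : Matrix I I ℂ) a a).re := by
      intro a; simp [φ]
    rw [Finset.sum_congr rfl fun a _ => this a]
    rw [← Complex.re_sum]
    exact htr
  let φ' : V →ₗ[ℝ] LinearMap.ker T := LinearMap.codRestrict _ φ hφker
  have hφ'inj : Function.Injective φ' := by
    intro M N h
    exact hφinj (congrArg Subtype.val h)
  have hVle : finrank ℝ V ≤ finrank ℝ (LinearMap.ker T) :=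
    LinearMap.finrank_le_finrank_of_injective hφ'inj
  have hTsurj : Function.Surjective T := by
    intro r
    obtain ⟨a₀⟩ := (inferInstance : Nonempty I)
    refine ⟨Pi.single (a₀, a₀) r, ?_⟩
    simp only [T, LinearMap.coe_mk, AddHom.coe_mk]
    rw [Finset.sum_eq_single a₀
      (fun b _ hb => by rw [Pi.single_apply, if_neg (by simp [hb])]) (by simp)]
    simp
  have hker : finrank ℝ (LinearMap.ker T) = (Fintype.card I) ^ 2 - 1 := by
    have h1 := LinearMap.finrank_range_add_finrank_ker T
    rw [LinearMap.range_eq_top.mpr hTsurj] at h1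
    rw [finrank_top, finrank_self] at h1
    rw [Module.finrank_pi, Fintype.card_prod, ← pow_two] at h1
    omega
  have hcard2 : Fintype.card {x : ι // x ≠ i₀} = Fintype.card ι - 1 := by
    simp [ne_eq, Fintype.card_subtype_compl, Fintype.card_subtype_eq]
  have hIpos : 1 ≤ Fintype.card I := Fintype.card_pos
  have hιpos : 1 ≤ Fintype.card ι := Fintype.card_pos
  have := hcard1.trans hVle
  rw [hcard2, hker] at this
  have : Fintype.card ι - 1 ≤ (Fintype.card I) ^ 2 - 1 := this
  have hsq : 1 ≤ (Fintype.card I) ^ 2 := Nat.one_le_pow _ _ hIpos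
  omega

open Matrix in
lemma prodMat_herm_trace {p : ℕ} (n : Fin p → ℕ) (C : ∀ i, Matrix (Fin (n i)) (Fin (n i)) ℂ)
    (hC : ∀ i, IsDensityMatrix (C i)) :
    (prodMat n C)ᴴ = prodMat n C ∧ (prodMat n C).trace = 1 := by
  constructor
  · ext x y
    simp only [Matrix.conjTranspose_apply, prodMat, star_prod]
    refine Finset.prod_congr rfl fun i _ => ?_
    rw [← Matrix.conjTranspose_apply, (hC i).1.1.eq]
  · show (∑ x : ∀ i, Fin (n i), ∏ i, C i (x i) (x i)) = 1
    rw [← Fintype.piFinset_univ,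
      ← Finset.prod_univ_sum (fun _ => Finset.univ) (fun i k => C i k k)]
    have : ∀ i : Fin p, (∑ k, C i k k) = 1 := fun i => (hC i).2
    rw [Finset.prod_congr rfl fun i _ => this i, Finset.prod_const_one]

lemma sum_extend {M : Type*} [AddCommMonoid M] {c N : ℕ} (h : c ≤ N) (F : Fin c → M) :
    ∑ j : Fin N, (if hj : (j : ℕ) < c then F ⟨j, hj⟩ else 0) = ∑ k : Fin c, F k := by
  have h1 : ∑ j : Fin N, (if hj : (j : ℕ) < c then F ⟨j, hj⟩ else 0)
      = ∑ j ∈ Finset.range N, (fun j => if hj : j < c then F ⟨j, hj⟩ else 0) j :=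
    Fin.sum_univ_eq_sum_range (fun j => if hj : j < c then F ⟨j, hj⟩ else 0) N
  rw [h1, ← Finset.sum_subset (Finset.range_subset_range.mpr h) (fun x _ hx => by
    rw [Finset.mem_range, not_lt] at hx
    simp [Nat.not_lt.mpr hx])]
  rw [← Fin.sum_univ_eq_sum_range]
  exact Finset.sum_congr rfl fun k _ => by simp [k.isLt]

/-- Carathéodory bound: every separable state, i.e. every element of the real
convex hull of the set of product states, is a convex combination of at most `N²` pure
product states, `N = n₁⋯n_p`. -/
theorem caratheodory_pure_ensemble {p : ℕ} (n : Fin p → ℕ)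
    (A : Matrix (∀ i, Fin (n i)) (∀ i, Fin (n i)) ℂ)
    (hA : A ∈ convexHull ℝ
      {M : Matrix (∀ i, Fin (n i)) (∀ i, Fin (n i)) ℂ |
        ∃ B : ∀ i, Matrix (Fin (n i)) (Fin (n i)) ℂ,
          (∀ i, IsDensityMatrix (B i)) ∧ M = prodMat n B}) :
    ∃ (l : Fin ((∏ i, n i) ^ 2) → ℝ)
      (B : Fin ((∏ i, n i) ^ 2) → ∀ i, Matrix (Fin (n i)) (Fin (n i)) ℂ),
      (∀ j, 0 ≤ l j) ∧ (∑ j, l j) = 1 ∧ (∀ j i, IsPureDensityMatrix (B j i)) ∧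
      A = ∑ j, l j • prodMat n (B j) := by
  classical
  by_cases hn : ∀ i, 0 < n i
  · have hI : Nonempty (∀ i, Fin (n i)) := ⟨fun i => ⟨0, hn i⟩⟩
    have hA2 : A ∈ convexHull ℝ {M : Matrix (∀ i, Fin (n i)) (∀ i, Fin (n i)) ℂ |
        ∃ C : ∀ i, Matrix (Fin (n i)) (Fin (n i)) ℂ,
          (∀ i, IsPureDensityMatrix (C i)) ∧ M = prodMat n C} := by
      refine convexHull_min ?_ (convex_convexHull ℝ _) hA
      rintro M ⟨B, hB, rfl⟩
      exact prod_mem_hull_pure n B hB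
    obtain ⟨ι, hfin, z, w, hrange, hai, hwpos, hwsum, hzsum⟩ :=
      eq_pos_convex_span_of_mem_convexHull hA2
    have hz : ∀ j, (z j).conjTranspose = z j ∧ (z j).trace = 1 := by
      intro j
      obtain ⟨C, hC, hCeq⟩ := hrange (Set.mem_range_self j)
      rw [hCeq]
      exact prodMat_herm_trace n C (fun i => (hC i).1)
    have hcard : Fintype.card ι ≤ (∏ i, n i) ^ 2 := by
      have := card_le_of_affineIndependent z hz hai
      simpa [Fintype.card_pi] using this
    have hιne : Nonempty ι := by
      by_contra h
      rw [not_nonempty_iff] at h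
      rw [Finset.univ_eq_empty, Finset.sum_empty] at hwsum
      exact one_ne_zero hwsum.symm
    choose C hC1 hC2 using fun j : ι => hrange (Set.mem_range_self j)
    set c := Fintype.card ι with hc
    set g := Fintype.equivFin ι with hg
    refine ⟨fun j => if hj : (j : ℕ) < c then w (g.symm ⟨j, hj⟩) else 0,
      fun j => C (if hj : (j : ℕ) < c then g.symm ⟨j, hj⟩ else Classical.arbitrary ι),
      ?_, ?_, ?_, ?_⟩
    · intro j
      by_cases hj : (j : ℕ) < c
      · simp only [dif_pos hj]
        exact (hwpos _).le
      · simp [dif_neg hj]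
    · rw [sum_extend hcard (fun k => w (g.symm k)), Equiv.sum_comp g.symm w]
      exact hwsum
    · intro j i
      by_cases hj : (j : ℕ) < c
      · simp only [dif_pos hj]; exact hC1 _ i
      · simp only [dif_neg hj]; exact hC1 _ i
    · have hterm : ∀ j : Fin ((∏ i, n i) ^ 2),
          (if hj : (j : ℕ) < c then w (g.symm ⟨j, hj⟩) else 0) •
            prodMat n (C (if hj : (j : ℕ) < c then g.symm ⟨j, hj⟩ else Classical.arbitrary ι))
          = (if hj : (j : ℕ) < c then w (g.symm ⟨j, hj⟩) • prodMat n (C (g.symm ⟨j, hj⟩))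
              else 0) := by
        intro j
        by_cases hj : (j : ℕ) < c
        · simp only [dif_pos hj]
        · simp only [dif_neg hj, zero_smul]
      rw [Finset.sum_congr rfl fun j _ => hterm j,
        sum_extend hcard (fun k => w (g.symm k) • prodMat n (C (g.symm k))),
        Equiv.sum_comp g.symm (fun k => w k • prodMat n (C k)), ← hzsum]
      exact Finset.sum_congr rfl fun j _ => by rw [hC2 j]
  · exfalso
    push_neg at hn
    obtain ⟨i₀, hi₀⟩ := hn
    have hS : {M : Matrix (∀ i, Fin (n i)) (∀ i, Fin (n i)) ℂ |
        ∃ B : ∀ i, Matrix (Fin (n i)) (Fin (n i)) ℂ,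
          (∀ i, IsDensityMatrix (B i)) ∧ M = prodMat n B} = ∅ := by
      ext M
      simp only [Set.mem_setOf_eq, Set.mem_empty_iff_false, iff_false, not_exists]
      rintro B ⟨hB, -⟩
      have h1 := (hB i₀).2
      haveI : IsEmpty (Fin (n i₀)) := by
        rw [Nat.le_zero.mp hi₀]
        infer_instance
      rw [Matrix.trace, Finset.univ_eq_empty, Finset.sum_empty] at h1
      exact one_ne_zero h1.symm
    rw [hS, convexHull_empty] at hA
    exact hA
end

section
/- Let all nᵢ ≥ 1. The set Σ(n₁,…,n_p) of separable states — the convex hull over ℝ of the set of tensor products of density matrices — contains a nonempty set that is open in the subspace topology of the hyperplane {A : Matrix I I ℂ | A is Hermitian and trace A = 1}. In particular, the set of separable mixed states is not of measure zero in the set of all density matrices. -/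
open scoped ComplexOrder
open MeasureTheory

section AuxProof

open Matrix
open scoped ComplexOrder
set_option linter.unusedSectionVars false
set_option linter.unusedTactic false
set_option maxHeartbeats 1000000

noncomputable instance {m : Type*} [Fintype m] : NormedSpace ℝ (Matrix m m ℂ) :=
  Matrix.normedSpace

variable {m : Type*} [Fintype m] [DecidableEq m]

/-- rank-one outer product -/
noncomputable def auxOuter (v : m → ℂ) : Matrix m m ℂ :=
  Matrix.of fun a b => v a * (starRingEnd ℂ) (v b)

lemma auxOuter_apply (v : m → ℂ) (a b : m) :
    auxOuter v a b = v a * (starRingEnd ℂ) (v b) := rfl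

lemma auxOuter_isHermitian (v : m → ℂ) : (auxOuter v).IsHermitian := by
  ext a b
  simp [auxOuter, Matrix.conjTranspose_apply, mul_comm]

lemma auxOuter_posSemidef (v : m → ℂ) : (auxOuter v).PosSemidef := by
  refine Matrix.PosSemidef.of_dotProduct_mulVec_nonneg (auxOuter_isHermitian v) fun x => ?_
  have h : dotProduct (star x) ((auxOuter v).mulVec x)
      = star (∑ b, (starRingEnd ℂ) (v b) * x b) * (∑ b, (starRingEnd ℂ) (v b) * x b) := by
    simp only [dotProduct, Matrix.mulVec, Pi.star_apply, auxOuter_apply]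
    rw [star_sum]
    rw [Finset.sum_mul_sum]
    refine Finset.sum_congr rfl fun a _ => ?_
    rw [Finset.mul_sum]
    refine Finset.sum_congr rfl fun b _ => ?_
    simp [dotProduct]
    ring
  rw [h]
  exact star_mul_self_nonneg _

lemma auxOuter_trace (v : m → ℂ) :
    (auxOuter v).trace = ∑ a, (Complex.normSq (v a) : ℂ) := by
  simp [Matrix.trace, Matrix.diag, auxOuter, Complex.mul_conj]

lemma auxOuter_mem_span (v : m → ℂ) :
    auxOuter v ∈ Submodule.span ℂ {D : Matrix m m ℂ | IsDensityMatrix D} := by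
  set t : ℝ := ∑ a, Complex.normSq (v a) with ht
  rcases eq_or_ne t 0 with h0 | h0
  · have hv : ∀ a, v a = 0 := by
      intro a
      have := (Finset.sum_eq_zero_iff_of_nonneg
        (fun a _ => Complex.normSq_nonneg (v a))).1 h0
      exact Complex.normSq_eq_zero.1 (this a (Finset.mem_univ a))
    have : auxOuter v = 0 := by
      ext a b; simp [auxOuter, hv]
    rw [this]; exact Submodule.zero_mem _
  · have htpos : 0 < t :=
      lt_of_le_of_ne (Finset.sum_nonneg fun a _ => Complex.normSq_nonneg _) (Ne.symm h0)
    have hD : IsDensityMatrix (((t⁻¹ : ℝ) : ℂ) • auxOuter v) := by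
      constructor
      · refine Matrix.PosSemidef.of_dotProduct_mulVec_nonneg ?_ fun x => ?_
        · have := auxOuter_isHermitian v
          unfold Matrix.IsHermitian at *
          rw [Matrix.conjTranspose_smul, this]
          congr 1
          simp
        · rw [Matrix.smul_mulVec, dotProduct_smul]
          have : (0:ℂ) ≤ ((t⁻¹ : ℝ) : ℂ) := by
            rw [Complex.zero_le_real]
            positivity
          exact mul_nonneg this ((auxOuter_posSemidef v).dotProduct_mulVec_nonneg x)
      · rw [Matrix.trace_smul, auxOuter_trace, smul_eq_mul, ← Complex.ofReal_sum, ← ht,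
          ← Complex.ofReal_mul, inv_mul_cancel₀ h0, Complex.ofReal_one]
    have : auxOuter v = ((t : ℝ) : ℂ) • (((t⁻¹ : ℝ) : ℂ) • auxOuter v) := by
      rw [smul_smul, ← Complex.ofReal_mul, mul_inv_cancel₀ h0]
      simp
    rw [this]
    exact Submodule.smul_mem _ _ (Submodule.subset_span hD)

lemma auxStdDiag_eq (a : m) :
    Matrix.single a a (1:ℂ) = auxOuter (fun x => if x = a then 1 else 0) := by
  classical
  ext i j
  simp only [auxOuter, Matrix.of_apply, Matrix.single, apply_ite (starRingEnd ℂ),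
    _root_.map_one, map_zero]
  split_ifs <;> simp_all

lemma auxStdDiag_density (a : m) : IsDensityMatrix (Matrix.single a a (1:ℂ)) := by
  classical
  rw [auxStdDiag_eq]
  refine ⟨auxOuter_posSemidef _, ?_⟩
  rw [auxOuter_trace]
  rw [show ∑ x, ((Complex.normSq (if x = a then 1 else 0) : ℝ) : ℂ)
      = ∑ x, (if x = a then (1:ℂ) else 0) from
    Finset.sum_congr rfl fun x _ => by split_ifs <;> simp]
  simp

lemma auxStdBasis_mem_span (a b : m) :
    Matrix.single a b (1:ℂ)
      ∈ Submodule.span ℂ {D : Matrix m m ℂ | IsDensityMatrix D} := by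
  classical
  rcases eq_or_ne a b with rfl | hab
  · rw [auxStdDiag_eq]
    exact auxOuter_mem_span _
  · have key : Matrix.single a b (1:ℂ)
        = (2⁻¹ : ℂ) • (auxOuter (fun x => if x = a then 1 else if x = b then 1 else 0)
            + Complex.I • auxOuter (fun x => if x = a then 1 else if x = b then Complex.I else 0))
          - (2⁻¹ * (1 + Complex.I)) • (auxOuter (fun x => if x = a then 1 else 0)
            + auxOuter (fun x => if x = b then 1 else 0)) := by
      ext i j
      simp only [Matrix.sub_apply, Matrix.smul_apply, Matrix.add_apply, auxOuter,
        Matrix.of_apply, Matrix.single, smul_eq_mul]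
      by_cases hia : i = a <;> by_cases hib : i = b <;>
        by_cases hja : j = a <;> by_cases hjb : j = b <;>
        simp_all [Complex.ext_iff, Complex.conj_I] <;> (try ring_nf) <;>
        (try norm_num) <;> (try simp_all [ne_comm])
    rw [key]
    refine Submodule.sub_mem _ (Submodule.smul_mem _ _ (Submodule.add_mem _
      (auxOuter_mem_span _) (Submodule.smul_mem _ _ (auxOuter_mem_span _))))
      (Submodule.smul_mem _ _ (Submodule.add_mem _ (auxOuter_mem_span _)
        (auxOuter_mem_span _)))

lemma aux_mem_span_dens (A : Matrix m m ℂ) :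
    A ∈ Submodule.span ℂ {D : Matrix m m ℂ | IsDensityMatrix D} := by
  rw [Matrix.matrix_eq_sum_single A]
  refine Submodule.sum_mem _ fun i _ => Submodule.sum_mem _ fun j _ => ?_
  have : Matrix.single i j (A i j) = A i j • Matrix.single i j (1:ℂ) := by
    rw [Matrix.smul_single, smul_eq_mul, mul_one]
  rw [this]
  exact Submodule.smul_mem _ _ (auxStdBasis_mem_span i j)

/-- the set of product states -/
def auxProdSet {p : ℕ} (n : Fin p → ℕ) :
    Set (Matrix (∀ i, Fin (n i)) (∀ i, Fin (n i)) ℂ) :=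
  {M | ∃ B : ∀ i, Matrix (Fin (n i)) (Fin (n i)) ℂ,
      (∀ i, IsDensityMatrix (B i)) ∧ M = prodMat n B}

variable {p : ℕ} {n : Fin p → ℕ}

lemma auxProdMat_trace (B : ∀ i, Matrix (Fin (n i)) (Fin (n i)) ℂ) :
    (prodMat n B).trace = ∏ i, (B i).trace := by
  simp only [Matrix.trace, Matrix.diag, prodMat]
  rw [Finset.prod_univ_sum]
  rw [← Fintype.piFinset_univ]

lemma auxProdMat_isHermitian (B : ∀ i, Matrix (Fin (n i)) (Fin (n i)) ℂ)
    (hB : ∀ i, (B i).IsHermitian) : (prodMat n B).IsHermitian := by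
  ext x y
  simp only [Matrix.conjTranspose_apply, prodMat, star_prod]
  exact Finset.prod_congr rfl fun i _ => by
    rw [← Matrix.conjTranspose_apply, hB i]

lemma auxProdSet_subset :
    auxProdSet n
      ⊆ {A : Matrix (∀ i, Fin (n i)) (∀ i, Fin (n i)) ℂ | A.IsHermitian ∧ A.trace = 1} := by
  rintro M ⟨B, hB, rfl⟩
  refine ⟨auxProdMat_isHermitian B fun i => (hB i).1.1, ?_⟩
  rw [auxProdMat_trace]
  exact Finset.prod_eq_one fun i _ => (hB i).2

lemma aux_prod_mem_spanC (B : ∀ i, Matrix (Fin (n i)) (Fin (n i)) ℂ) :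
    prodMat n B ∈ Submodule.span ℂ (auxProdSet n) := by
  classical
  have h := fun i => Submodule.mem_span_set.1 (aux_mem_span_dens (B i))
  choose c hsupp hsum using h
  have key : prodMat n B = ∑ g ∈ Fintype.piFinset (fun i => (c i).support),
      (∏ i, c i (g i)) • prodMat n g := by
    ext x y
    rw [Matrix.sum_apply]
    have hg : ∀ g ∈ Fintype.piFinset (fun i => (c i).support),
        ((∏ i, c i (g i)) • prodMat n g) x y = ∏ i, (c i (g i) * g i (x i) (y i)) := by
      intro g _
      simp [prodMat, Finset.prod_mul_distrib]
    rw [Finset.sum_congr rfl hg,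
      ← Finset.prod_univ_sum (fun i => (c i).support) (fun i D => c i D * D (x i) (y i))]
    refine Finset.prod_congr rfl fun i _ => ?_
    rw [← hsum i, Finsupp.sum]
    simp [Matrix.sum_apply]
  rw [key]
  refine Submodule.sum_mem _ fun g hg => Submodule.smul_mem _ _ (Submodule.subset_span ?_)
  exact ⟨g, fun i => hsupp i (Fintype.mem_piFinset.1 hg i), rfl⟩

lemma aux_matrix_mem_spanC (A : Matrix (∀ i, Fin (n i)) (∀ i, Fin (n i)) ℂ) :
    A ∈ Submodule.span ℂ (auxProdSet n) := by
  classical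
  rw [Matrix.matrix_eq_sum_single A]
  refine Submodule.sum_mem _ fun x _ => Submodule.sum_mem _ fun y _ => ?_
  have h1 : Matrix.single x y (A x y) = A x y • Matrix.single x y (1:ℂ) := by
    rw [Matrix.smul_single, smul_eq_mul, mul_one]
  have h2 : Matrix.single x y (1:ℂ)
      = prodMat n (fun i => Matrix.single (x i) (y i) (1:ℂ)) := by
    ext x' y'
    simp only [Matrix.single, prodMat, Matrix.of_apply]
    rw [Finset.prod_boole]
    have hiff : (x = x' ∧ y = y') ↔ ∀ i ∈ Finset.univ, x i = x' i ∧ y i = y' i := by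
      simp [funext_iff, forall_and]
    by_cases h : x = x' ∧ y = y'
    · rw [if_pos h, if_pos (hiff.1 h)]
    · rw [if_neg h, if_neg (fun hh => h (hiff.2 hh))]
  rw [h1, h2]
  exact Submodule.smul_mem _ _ (aux_prod_mem_spanC _)

lemma aux_complex_key1 (c u v : ℂ) :
    (2⁻¹:ℝ) • (c * u + star c * v)
      = c.re • ((2⁻¹:ℝ) • (u + v)) - c.im • ((2⁻¹:ℝ) • (Complex.I * (v - u))) := by
  simp only [Complex.real_smul, smul_eq_mul, Complex.star_def]
  apply Complex.ext <;> simp [Complex.conj_re, Complex.conj_im] <;> ring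

lemma aux_complex_key2 (c u v : ℂ) :
    (2⁻¹:ℝ) • (Complex.I * (star c * v - c * u))
      = c.re • ((2⁻¹:ℝ) • (Complex.I * (v - u))) + c.im • ((2⁻¹:ℝ) • (u + v)) := by
  simp only [Complex.real_smul, smul_eq_mul, Complex.star_def]
  apply Complex.ext <;> simp [Complex.conj_re, Complex.conj_im] <;> ring

lemma aux_herm_real_span {I : Type*} [Fintype I] [DecidableEq I]
    (S : Set (Matrix I I ℂ)) (hS : ∀ M ∈ S, M.IsHermitian)
    (A : Matrix I I ℂ) (hA : A.IsHermitian) (hmem : A ∈ Submodule.span ℂ S) :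
    A ∈ Submodule.span ℝ S := by
  set T := Submodule.span ℝ S with hT
  have main : ∀ M ∈ Submodule.span ℂ S,
      (2⁻¹:ℝ) • (M + Mᴴ) ∈ T ∧ (2⁻¹:ℝ) • (Complex.I • (Mᴴ - M)) ∈ T := by
    intro M hM
    induction hM using Submodule.span_induction with
    | mem s hs =>
      constructor
      · have : (2⁻¹:ℝ) • (s + sᴴ) = s := by
          rw [hS s hs, ← two_smul ℝ s, smul_smul]
          norm_num
        rw [this]; exact Submodule.subset_span hs
      · have : (2⁻¹:ℝ) • (Complex.I • (sᴴ - s)) = 0 := by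
          rw [hS s hs, sub_self, smul_zero, smul_zero]
        rw [this]; exact Submodule.zero_mem _
    | zero => simp
    | add x y hx hy ihx ihy =>
      constructor
      · have : (2⁻¹:ℝ) • ((x + y) + (x + y)ᴴ)
            = (2⁻¹:ℝ) • (x + xᴴ) + (2⁻¹:ℝ) • (y + yᴴ) := by
          rw [conjTranspose_add, ← smul_add]
          congr 1
          abel
        rw [this]; exact Submodule.add_mem _ ihx.1 ihy.1
      · have : (2⁻¹:ℝ) • (Complex.I • ((x + y)ᴴ - (x + y)))
            = (2⁻¹:ℝ) • (Complex.I • (xᴴ - x)) + (2⁻¹:ℝ) • (Complex.I • (yᴴ - y)) := by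
          rw [conjTranspose_add, ← smul_add, ← smul_add]
          congr 2
          abel
        rw [this]; exact Submodule.add_mem _ ihx.2 ihy.2
    | smul c x hx ih =>
      have e1 : (2⁻¹:ℝ) • ((c • x) + (c • x)ᴴ)
          = c.re • ((2⁻¹:ℝ) • (x + xᴴ)) - c.im • ((2⁻¹:ℝ) • (Complex.I • (xᴴ - x))) := by
        rw [conjTranspose_smul]
        ext a b
        simp only [Matrix.smul_apply, Matrix.add_apply, Matrix.sub_apply, smul_eq_mul]
        exact aux_complex_key1 c (x a b) (xᴴ a b)
      have e2 : (2⁻¹:ℝ) • (Complex.I • ((c • x)ᴴ - c • x))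
          = c.re • ((2⁻¹:ℝ) • (Complex.I • (xᴴ - x))) + c.im • ((2⁻¹:ℝ) • (x + xᴴ)) := by
        rw [conjTranspose_smul]
        ext a b
        simp only [Matrix.smul_apply, Matrix.add_apply, Matrix.sub_apply, smul_eq_mul]
        exact aux_complex_key2 c (x a b) (xᴴ a b)
      exact ⟨e1 ▸ Submodule.sub_mem _ (Submodule.smul_mem _ _ ih.1)
          (Submodule.smul_mem _ _ ih.2),
        e2 ▸ Submodule.add_mem _ (Submodule.smul_mem _ _ ih.2)
          (Submodule.smul_mem _ _ ih.1)⟩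
  have h := (main A hmem).1
  have hAA : (2⁻¹:ℝ) • (A + Aᴴ) = A := by
    rw [hA, ← two_smul ℝ A, smul_smul]
    norm_num
  rwa [hAA] at h

lemma aux_herm_mem_spanR (A : Matrix (∀ i, Fin (n i)) (∀ i, Fin (n i)) ℂ)
    (hA : A.IsHermitian) : A ∈ Submodule.span ℝ (auxProdSet n) :=
  aux_herm_real_span _ (fun M hM => (auxProdSet_subset hM).1) A hA (aux_matrix_mem_spanC A)

/-- the trace-one Hermitian hyperplane as an affine subspace -/
noncomputable def auxHermOne (n : Fin p → ℕ) :
    AffineSubspace ℝ (Matrix (∀ i, Fin (n i)) (∀ i, Fin (n i)) ℂ) where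
  carrier := {A | A.IsHermitian ∧ A.trace = 1}
  smul_vsub_vadd_mem' := by
    rintro c p1 p2 p3 ⟨h1, t1⟩ ⟨h2, t2⟩ ⟨h3, t3⟩
    constructor
    · have : (c • (p1 -ᵥ p2) +ᵥ p3 : Matrix _ _ ℂ) = c • (p1 - p2) + p3 := rfl
      rw [this]
      unfold Matrix.IsHermitian at *
      rw [conjTranspose_add, conjTranspose_smul, conjTranspose_sub, h1, h2, h3, star_trivial]
    · have : (c • (p1 -ᵥ p2) +ᵥ p3 : Matrix _ _ ℂ) = c • (p1 - p2) + p3 := rfl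
      rw [this, Matrix.trace_add, Matrix.trace_smul, Matrix.trace_sub, t1, t2, t3,
        sub_self, smul_zero, zero_add]

end AuxProof

/-- the set of separable states (the real convex hull of the product states)
contains a nonempty set open in the subspace topology of the trace-one Hermitian hyperplane;
in particular the separable states are not negligible among all density matrices. -/
theorem separable_contains_open {p : ℕ} (n : Fin p → ℕ) (hn : ∀ i, 1 ≤ n i) :
    ∃ U : Set {A : Matrix (∀ i, Fin (n i)) (∀ i, Fin (n i)) ℂ //
        A.IsHermitian ∧ A.trace = 1},
      U.Nonempty ∧ IsOpen U ∧ Subtype.val '' U ⊆ convexHull ℝ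
        {M : Matrix (∀ i, Fin (n i)) (∀ i, Fin (n i)) ℂ |
          ∃ B : ∀ i, Matrix (Fin (n i)) (Fin (n i)) ℂ,
            (∀ i, IsDensityMatrix (B i)) ∧ M = prodMat n B} := by
  classical
  set S := auxProdSet n with hSdef
  set K := convexHull ℝ S with hK
  have hS0 : prodMat n (fun i => Matrix.single ⟨0, hn i⟩ ⟨0, hn i⟩ (1:ℂ)) ∈ S :=
    ⟨_, fun i => auxStdDiag_density _, rfl⟩
  set s₀ := prodMat n (fun i => Matrix.single ⟨0, hn i⟩ ⟨0, hn i⟩ (1:ℂ)) with hs₀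
  set H : Set (Matrix (∀ i, Fin (n i)) (∀ i, Fin (n i)) ℂ) :=
    {A | A.IsHermitian ∧ A.trace = 1} with hH
  have hspan_le : affineSpan ℝ S ≤ auxHermOne n := affineSpan_le.2 auxProdSet_subset
  have hspan_ge : ∀ A ∈ H, A ∈ affineSpan ℝ S := by
    intro A hA
    have hsp := aux_herm_mem_spanR A hA.1
    rw [Submodule.mem_span_set] at hsp
    obtain ⟨c, hsupp, hsum⟩ := hsp
    have hc : ∑ M ∈ c.support, c M • M = A := hsum
    have htr : ∀ M ∈ c.support, Matrix.trace M = 1 := fun M hM =>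
      (auxProdSet_subset (hsupp hM)).2
    have hcoef : ∑ M ∈ c.support, c M = 1 := by
      have h1 : Matrix.trace A = ∑ M ∈ c.support, ((c M : ℝ) : ℂ) := by
        rw [← hc, Matrix.trace_sum]
        refine Finset.sum_congr rfl fun M hM => ?_
        rw [Matrix.trace_smul, htr M hM, Complex.real_smul, mul_one]
      rw [hA.2, ← Complex.ofReal_sum] at h1
      exact_mod_cast h1.symm
    have hdiff : A - s₀ ∈ vectorSpan ℝ S := by
      have heq : A - s₀ = ∑ M ∈ c.support, c M • (M - s₀) := by
        have h2 : ∑ M ∈ c.support, c M • (M - s₀)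
            = (∑ M ∈ c.support, c M • M) - (∑ M ∈ c.support, c M) • s₀ := by
          simp [smul_sub, Finset.sum_sub_distrib, Finset.sum_smul]
        rw [h2, hc, hcoef, one_smul]
      rw [heq]
      exact Submodule.sum_mem _ fun M hM =>
        Submodule.smul_mem _ _ (vsub_mem_vectorSpan ℝ (hsupp hM) hS0)
    have hAv : A = (A - s₀) +ᵥ s₀ := by simp
    rw [hAv]
    exact AffineSubspace.vadd_mem_of_mem_direction
      (by rw [direction_affineSpan]; exact hdiff) (mem_affineSpan ℝ hS0)
  have hset : (affineSpan ℝ K : Set _) = H := by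
    rw [hK, affineSpan_convexHull]
    apply Set.Subset.antisymm
    · exact fun A hA => hspan_le hA
    · exact hspan_ge
  have hKH : K ⊆ H := convexHull_min auxProdSet_subset (auxHermOne n).convex
  obtain ⟨x, hx⟩ := Set.Nonempty.intrinsicInterior (convex_convexHull ℝ S)
    ⟨s₀, subset_convexHull ℝ S hS0⟩
  have hxK : x ∈ K := intrinsicInterior_subset hx
  refine ⟨Subtype.val ⁻¹' intrinsicInterior ℝ K, ⟨⟨x, hKH hxK⟩, hx⟩, ?_, ?_⟩
  · set e : {A : Matrix (∀ i, Fin (n i)) (∀ i, Fin (n i)) ℂ //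
        A.IsHermitian ∧ A.trace = 1} → affineSpan ℝ K :=
      fun y => ⟨y.1, by rw [← SetLike.mem_coe, hset]; exact y.2⟩ with he
    have hcont : Continuous e := Continuous.subtype_mk continuous_subtype_val _
    have hU : Subtype.val ⁻¹' intrinsicInterior ℝ K
        = e ⁻¹' (interior ((↑) ⁻¹' K : Set (affineSpan ℝ K))) := by
      ext y
      simp only [Set.mem_preimage, intrinsicInterior, Set.mem_image]
      constructor
      · rintro ⟨z, hz, hzv⟩
        have hze : z = e y := Subtype.ext hzv
        rwa [hze] at hz
      · intro h
        exact ⟨e y, h, rfl⟩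
    rw [hU]
    exact (isOpen_interior).preimage hcont
  · rintro _ ⟨y, hy, rfl⟩
    exact intrinsicInterior_subset hy
end

section
/- (Orthogonality obstruction to surjectivity of the differential of the mixing map, bipartite case.) Let A_{j1} : Matrix (Fin n₁) (Fin n₁) ℂ and A_{j2} : Matrix (Fin n₂) (Fin n₂) ℂ (j = 1,…,k) be Hermitian. Suppose there exists a nonzero Hermitian B with trace(B · A_{j1}) = 0 for all j, and a nonzero Hermitian C with trace C = 0 and trace(C · A_{j2}) = 0 for all j. Then the Kronecker product B ⊗ C is nonzero, Hermitian, has trace 0, and satisfies trace((B ⊗ C) · V) = 0 for every V in the ℝ-linear span of the set {H ⊗ A_{j2} : H Hermitian n₁×n₁, 1 ≤ j ≤ k} ∪ {A_{j1} ⊗ H' : H' Hermitian n₂×n₂, 1 ≤ j ≤ k}. (This span contains the image of the differential of the length-k mixing function at the point determined by the A_{ji}, so that differential is not onto.) -/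
open scoped Kronecker

namespace Matrix

variable {α : Type*} {l m n p : Type*}

theorem kronecker_ne_zero [MulZeroClass α] [NoZeroDivisors α] {A : Matrix l m α}
    {B : Matrix n p α} (hA : A ≠ 0) (hB : B ≠ 0) : A ⊗ₖ B ≠ 0 := by
  obtain ⟨i, j, hij⟩ : ∃ i j, A i j ≠ 0 := by simpa [← Matrix.ext_iff] using hA
  obtain ⟨i', j', hij'⟩ : ∃ i' j', B i' j' ≠ 0 := by simpa [← Matrix.ext_iff] using hB
  intro h
  exact mul_ne_zero hij hij' (by simpa using congr_fun₂ h (i, i') (j, j'))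

theorem IsHermitian.kronecker [CommMagma α] [StarMul α] {A : Matrix m m α} {B : Matrix n n α}
    (hA : A.IsHermitian) (hB : B.IsHermitian) : (A ⊗ₖ B).IsHermitian := by
  rw [IsHermitian, conjTranspose_kronecker, hA.eq, hB.eq]

theorem trace_kronecker_mul_kronecker [Fintype m] [Fintype n] [CommSemiring α]
    (A C : Matrix m m α) (B D : Matrix n n α) :
    ((A ⊗ₖ B) * (C ⊗ₖ D)).trace = (A * C).trace * (B * D).trace := by
  rw [← mul_kronecker_mul, trace_kronecker]

theorem trace_mul_eq_zero_of_mem_span {R : Type*} [Semiring R] [Fintype n] [Semiring α]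
    [Module R α] [SMulCommClass R α α] {X : Matrix n n α} {s : Set (Matrix n n α)}
    (hs : ∀ M ∈ s, (X * M).trace = 0) {V : Matrix n n α} (hV : V ∈ Submodule.span R s) :
    (X * V).trace = 0 := by
  induction hV using Submodule.span_induction with
  | mem M hM => exact hs M hM
  | zero => rw [Matrix.mul_zero, trace_zero]
  | add M N _ _ hM hN => rw [Matrix.mul_add, trace_add, hM, hN, add_zero]
  | smul r M _ hM => rw [Matrix.mul_smul, trace_smul, hM, smul_zero]

end Matrix

theorem kronecker_orthogonality_obstruction_general {n₁ n₂ k : ℕ}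
    (A₁ : Fin k → Matrix (Fin n₁) (Fin n₁) ℂ) (A₂ : Fin k → Matrix (Fin n₂) (Fin n₂) ℂ)
    (B : Matrix (Fin n₁) (Fin n₁) ℂ) (hB : B.IsHermitian) (hB0 : B ≠ 0)
    (hBorth : ∀ j, (B * A₁ j).trace = 0)
    (C : Matrix (Fin n₂) (Fin n₂) ℂ) (hC : C.IsHermitian) (hC0 : C ≠ 0)
    (hCtr : C.trace = 0) (hCorth : ∀ j, (C * A₂ j).trace = 0) :
    B ⊗ₖ C ≠ 0 ∧ (B ⊗ₖ C).IsHermitian ∧ (B ⊗ₖ C).trace = 0 ∧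
      ∀ V ∈ Submodule.span ℝ
        ({M : Matrix (Fin n₁ × Fin n₂) (Fin n₁ × Fin n₂) ℂ |
            ∃ (H : Matrix (Fin n₁) (Fin n₁) ℂ) (j : Fin k), H.IsHermitian ∧ M = H ⊗ₖ A₂ j} ∪
         {M : Matrix (Fin n₁ × Fin n₂) (Fin n₁ × Fin n₂) ℂ |
            ∃ (H' : Matrix (Fin n₂) (Fin n₂) ℂ) (j : Fin k), H'.IsHermitian ∧ M = A₁ j ⊗ₖ H'}),
        ((B ⊗ₖ C) * V).trace = 0 := by
  refine ⟨Matrix.kronecker_ne_zero hB0 hC0, hB.kronecker hC,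
    by rw [Matrix.trace_kronecker, hCtr, mul_zero],
    fun V hV => Matrix.trace_mul_eq_zero_of_mem_span ?_ hV⟩
  rintro _ (⟨H, j, -, rfl⟩ | ⟨H', j, -, rfl⟩)
  · rw [Matrix.trace_kronecker_mul_kronecker, hCorth, mul_zero]
  · rw [Matrix.trace_kronecker_mul_kronecker, hBorth, zero_mul]

/-- orthogonality obstruction, bipartite case: if the Hermitian matrix `B ≠ 0`
is trace-orthogonal to all `A₁ j` and the traceless Hermitian matrix `C ≠ 0` is
trace-orthogonal to all `A₂ j`, then `B ⊗ C` is nonzero, Hermitian, traceless, and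
trace-orthogonal to the real span of `{H ⊗ A₂ j} ∪ {A₁ j ⊗ H'}` (hence the differential of
the length-`k` mixing function is not onto). -/
theorem kronecker_orthogonality_obstruction {n₁ n₂ k : ℕ}
    (A₁ : Fin k → Matrix (Fin n₁) (Fin n₁) ℂ) (A₂ : Fin k → Matrix (Fin n₂) (Fin n₂) ℂ)
    (hA₁ : ∀ j, (A₁ j).IsHermitian) (hA₂ : ∀ j, (A₂ j).IsHermitian)
    (B : Matrix (Fin n₁) (Fin n₁) ℂ) (hB : B.IsHermitian) (hB0 : B ≠ 0)
    (hBorth : ∀ j, (B * A₁ j).trace = 0)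
    (C : Matrix (Fin n₂) (Fin n₂) ℂ) (hC : C.IsHermitian) (hC0 : C ≠ 0)
    (hCtr : C.trace = 0) (hCorth : ∀ j, (C * A₂ j).trace = 0) :
    B ⊗ₖ C ≠ 0 ∧ (B ⊗ₖ C).IsHermitian ∧ (B ⊗ₖ C).trace = 0 ∧
      ∀ V ∈ Submodule.span ℝ
        ({M : Matrix (Fin n₁ × Fin n₂) (Fin n₁ × Fin n₂) ℂ |
            ∃ (H : Matrix (Fin n₁) (Fin n₁) ℂ) (j : Fin k), H.IsHermitian ∧ M = H ⊗ₖ A₂ j} ∪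
         {M : Matrix (Fin n₁ × Fin n₂) (Fin n₁ × Fin n₂) ℂ |
            ∃ (H' : Matrix (Fin n₂) (Fin n₂) ℂ) (j : Fin k), H'.IsHermitian ∧ M = A₁ j ⊗ₖ H'}),
        ((B ⊗ₖ C) * V).trace = 0 :=
  kronecker_orthogonality_obstruction_general A₁ A₂ B hB hB0 hBorth C hC hC0 hCtr hCorth
end

section
/- (Tangent space identity, bipartite case.) Every Hermitian matrix T : Matrix (Fin n₁ × Fin n₂) (Fin n₁ × Fin n₂) ℂ with trace T = 0 lies in the ℝ-linear span of the set {B ⊗ C : B Hermitian n₁×n₁ with trace B = 0, C Hermitian n₂×n₂} ∪ {B ⊗ C : B Hermitian n₁×n₁, C Hermitian n₂×n₂ with trace C = 0}. In symbols: τ₀(n₁n₂) = τ₀(n₁)⊗Herm(n₂) + Herm(n₁)⊗τ₀(n₂). -/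
open scoped Kronecker
open Matrix

variable {n₁ n₂ : ℕ}

private noncomputable def blk (T : Matrix (Fin n₁ × Fin n₂) (Fin n₁ × Fin n₂) ℂ) (a b : Fin n₁) :
    Matrix (Fin n₂) (Fin n₂) ℂ := of fun x y => T (a, x) (b, y)

private lemma blk_conjTranspose (T : Matrix (Fin n₁ × Fin n₂) (Fin n₁ × Fin n₂) ℂ)
    (hT : T.IsHermitian) (a b : Fin n₁) : (blk T a b)ᴴ = blk T b a := by
  ext x y
  simp only [conjTranspose_apply, blk, of_apply]
  rw [show T (b, x) (a, y) = Tᴴ (b, x) (a, y) by rw [hT.eq]]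
  simp [conjTranspose_apply]

private lemma sum_blk (T : Matrix (Fin n₁ × Fin n₂) (Fin n₁ × Fin n₂) ℂ) :
    T = ∑ a : Fin n₁, ∑ b : Fin n₁, (Matrix.single a b (1:ℂ)) ⊗ₖ blk T a b := by
  ext ⟨x1, x2⟩ ⟨y1, y2⟩
  simp [Matrix.sum_apply, kroneckerMap_apply, Matrix.single, blk, ite_and]

private lemma stdE_conjT (a b : Fin n₁) :
    (Matrix.single a b (1:ℂ))ᴴ = Matrix.single b a (1:ℂ) := by
  ext i j
  simp [conjTranspose_apply, Matrix.single, apply_ite (starRingEnd ℂ), and_comm]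

private lemma H1_herm (a b : Fin n₁) :
    (Matrix.single a b (1:ℂ) + Matrix.single b a (1:ℂ)).IsHermitian := by
  unfold Matrix.IsHermitian
  rw [conjTranspose_add, stdE_conjT, stdE_conjT, add_comm]

private lemma H2_herm (a b : Fin n₁) :
    (Complex.I • (Matrix.single a b (1:ℂ) - Matrix.single b a (1:ℂ))).IsHermitian := by
  unfold Matrix.IsHermitian
  rw [conjTranspose_smul, conjTranspose_sub, stdE_conjT, stdE_conjT]
  simp only [Complex.star_def, Complex.conj_I]
  rw [neg_smul, ← smul_neg, neg_sub]

private lemma P_herm (M : Matrix (Fin n₂) (Fin n₂) ℂ) : (M + Mᴴ).IsHermitian := by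
  unfold Matrix.IsHermitian
  rw [conjTranspose_add, conjTranspose_conjTranspose, add_comm]

private lemma Q_herm (M : Matrix (Fin n₂) (Fin n₂) ℂ) : (Complex.I • (Mᴴ - M)).IsHermitian := by
  unfold Matrix.IsHermitian
  rw [conjTranspose_smul, conjTranspose_sub, conjTranspose_conjTranspose]
  simp only [Complex.star_def, Complex.conj_I]
  rw [neg_smul, ← smul_neg, neg_sub]

private lemma term_eq (a b : Fin n₁) (M : Matrix (Fin n₂) (Fin n₂) ℂ) :
    ((1:ℝ)/4) • ((Matrix.single a b (1:ℂ) + Matrix.single b a (1:ℂ)) ⊗ₖ (M + Mᴴ))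
      + ((1:ℝ)/4) • ((Complex.I • (Matrix.single a b (1:ℂ) - Matrix.single b a (1:ℂ)))
          ⊗ₖ (Complex.I • (Mᴴ - M)))
    = ((1:ℝ)/2) • (Matrix.single a b (1:ℂ) ⊗ₖ M)
      + ((1:ℝ)/2) • (Matrix.single b a (1:ℂ) ⊗ₖ Mᴴ) := by
  ext ⟨x1, x2⟩ ⟨y1, y2⟩
  simp only [Matrix.add_apply, Matrix.smul_apply, kroneckerMap_apply, smul_eq_mul, Matrix.sub_apply,
    Complex.real_smul]
  push_cast
  ring_nf
  simp only [Complex.I_sq]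
  ring

private lemma herm_mem_kron_span (T : Matrix (Fin n₁ × Fin n₂) (Fin n₁ × Fin n₂) ℂ)
    (hT : T.IsHermitian) :
    T ∈ Submodule.span ℝ {M : Matrix (Fin n₁ × Fin n₂) (Fin n₁ × Fin n₂) ℂ |
        ∃ (B : Matrix (Fin n₁) (Fin n₁) ℂ) (C : Matrix (Fin n₂) (Fin n₂) ℂ),
          B.IsHermitian ∧ C.IsHermitian ∧ M = B ⊗ₖ C} := by
  have h1 : ∑ a : Fin n₁, ∑ b : Fin n₁,
      ((1:ℝ)/2) • (Matrix.single a b (1:ℂ) ⊗ₖ blk T a b) = ((1:ℝ)/2) • T := by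
    simp_rw [← Finset.smul_sum]
    rw [← sum_blk]
  have h2 : ∑ a : Fin n₁, ∑ b : Fin n₁,
      ((1:ℝ)/2) • (Matrix.single b a (1:ℂ) ⊗ₖ (blk T a b)ᴴ) = ((1:ℝ)/2) • T := by
    simp_rw [blk_conjTranspose T hT]
    rw [Finset.sum_comm]
    simp_rw [← Finset.smul_sum]
    rw [← sum_blk]
  have key : T = ∑ a : Fin n₁, ∑ b : Fin n₁,
      (((1:ℝ)/4) • ((Matrix.single a b (1:ℂ) + Matrix.single b a (1:ℂ)) ⊗ₖ
          (blk T a b + (blk T a b)ᴴ))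
        + ((1:ℝ)/4) • ((Complex.I • (Matrix.single a b (1:ℂ) - Matrix.single b a (1:ℂ)))
            ⊗ₖ (Complex.I • ((blk T a b)ᴴ - blk T a b)))) := by
    simp_rw [term_eq, Finset.sum_add_distrib]
    rw [h1, h2, ← add_smul]
    norm_num
  rw [key]
  refine Submodule.sum_mem _ fun a _ => Submodule.sum_mem _ fun b _ => add_mem ?_ ?_
  · exact Submodule.smul_mem _ _ (Submodule.subset_span
      ⟨_, _, H1_herm a b, P_herm (blk T a b), rfl⟩)
  · exact Submodule.smul_mem _ _ (Submodule.subset_span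
      ⟨_, _, H2_herm a b, Q_herm (blk T a b), rfl⟩)

-- real smul of 1 is hermitian
private lemma smul_one_herm (r : ℝ) : ((r • (1 : Matrix (Fin n₁) (Fin n₁) ℂ))).IsHermitian := by
  unfold Matrix.IsHermitian
  rw [conjTranspose_smul]
  simp

private lemma herm_trace_re (B : Matrix (Fin n₁) (Fin n₁) ℂ) (hB : B.IsHermitian) :
    ((B.trace.re : ℂ)) = B.trace := by
  have := trace_conjTranspose B
  rw [hB.eq] at this
  exact Complex.conj_eq_iff_re.mp this.symm

private lemma traceless_part (B : Matrix (Fin n₁) (Fin n₁) ℂ) (hB : B.IsHermitian)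
    (hn : 0 < n₁) : (B - (B.trace.re / n₁ : ℝ) • 1).trace = 0 := by
  rw [trace_sub, trace_smul, trace_one]
  simp only [Fintype.card_fin, smul_eq_mul, Complex.real_smul]
  rw [← herm_trace_re B hB]
  push_cast
  field_simp [show (n₁:ℂ) ≠ 0 from Nat.cast_ne_zero.mpr hn.ne']
  simp [Complex.ofReal_re]

private lemma kron_split (B : Matrix (Fin n₁) (Fin n₁) ℂ) (C : Matrix (Fin n₂) (Fin n₂) ℂ)
    (r s : ℝ) :
    B ⊗ₖ C = (B - r • 1) ⊗ₖ C + r • ((1 : Matrix (Fin n₁) (Fin n₁) ℂ) ⊗ₖ (C - s • 1))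
      + (r * s) • ((1 : Matrix (Fin n₁) (Fin n₁) ℂ) ⊗ₖ (1 : Matrix (Fin n₂) (Fin n₂) ℂ)) := by
  ext ⟨x1, x2⟩ ⟨y1, y2⟩
  simp only [Matrix.add_apply, Matrix.smul_apply, kroneckerMap_apply, Matrix.sub_apply, Complex.real_smul,
    one_apply]
  push_cast
  ring

/-- tangent space identity, bipartite case: every traceless Hermitian matrix
on `ℂ^{n₁} ⊗ ℂ^{n₂}` lies in the real span of
`τ₀(n₁) ⊗ Herm(n₂) ∪ Herm(n₁) ⊗ τ₀(n₂)`. -/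
theorem traceless_hermitian_span_kronecker {n₁ n₂ : ℕ}
    (T : Matrix (Fin n₁ × Fin n₂) (Fin n₁ × Fin n₂) ℂ)
    (hT : T.IsHermitian) (hTtr : T.trace = 0) :
    T ∈ Submodule.span ℝ
      ({M : Matrix (Fin n₁ × Fin n₂) (Fin n₁ × Fin n₂) ℂ |
          ∃ (B : Matrix (Fin n₁) (Fin n₁) ℂ) (C : Matrix (Fin n₂) (Fin n₂) ℂ),
            B.IsHermitian ∧ B.trace = 0 ∧ C.IsHermitian ∧ M = B ⊗ₖ C} ∪
       {M : Matrix (Fin n₁ × Fin n₂) (Fin n₁ × Fin n₂) ℂ |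
          ∃ (B : Matrix (Fin n₁) (Fin n₁) ℂ) (C : Matrix (Fin n₂) (Fin n₂) ℂ),
            B.IsHermitian ∧ C.IsHermitian ∧ C.trace = 0 ∧ M = B ⊗ₖ C}) := by
  rcases Nat.eq_zero_or_pos n₁ with hn₁ | hn₁
  · subst hn₁
    have : T = 0 := by ext ⟨a, _⟩; exact a.elim0
    rw [this]; exact Submodule.zero_mem _
  rcases Nat.eq_zero_or_pos n₂ with hn₂ | hn₂
  · subst hn₂
    have : T = 0 := by ext ⟨_, a⟩; exact a.elim0
    rw [this]; exact Submodule.zero_mem _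
  set S := ({M : Matrix (Fin n₁ × Fin n₂) (Fin n₁ × Fin n₂) ℂ |
          ∃ (B : Matrix (Fin n₁) (Fin n₁) ℂ) (C : Matrix (Fin n₂) (Fin n₂) ℂ),
            B.IsHermitian ∧ B.trace = 0 ∧ C.IsHermitian ∧ M = B ⊗ₖ C} ∪
       {M : Matrix (Fin n₁ × Fin n₂) (Fin n₁ × Fin n₂) ℂ |
          ∃ (B : Matrix (Fin n₁) (Fin n₁) ℂ) (C : Matrix (Fin n₂) (Fin n₂) ℂ),
            B.IsHermitian ∧ C.IsHermitian ∧ C.trace = 0 ∧ M = B ⊗ₖ C}) with hS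
  set P := Submodule.span ℝ S with hP
  set E := (1 : Matrix (Fin n₁) (Fin n₁) ℂ) ⊗ₖ (1 : Matrix (Fin n₂) (Fin n₂) ℂ) with hE
  -- every hermitian kronecker lies in P ⊔ ℝ ∙ E
  have hred : ∀ (B : Matrix (Fin n₁) (Fin n₁) ℂ) (C : Matrix (Fin n₂) (Fin n₂) ℂ),
      B.IsHermitian → C.IsHermitian → B ⊗ₖ C ∈ P ⊔ (Submodule.span ℝ {E}) := by
    intro B C hB hC
    rw [kron_split B C (B.trace.re / n₁) (C.trace.re / n₂)]
    refine add_mem (Submodule.mem_sup_left (add_mem ?_ ?_)) (Submodule.mem_sup_right ?_)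
    · exact Submodule.subset_span (Or.inl ⟨_, _, hB.sub (smul_one_herm _),
        traceless_part B hB hn₁, hC, rfl⟩)
    · exact Submodule.smul_mem _ _ (Submodule.subset_span (Or.inr ⟨_, _, isHermitian_one,
        hC.sub (smul_one_herm _), traceless_part C hC hn₂, rfl⟩))
    · exact Submodule.mem_span_singleton.mpr ⟨_, rfl⟩
  have hQ : T ∈ P ⊔ (Submodule.span ℝ {E}) := by
    refine Submodule.span_le.mpr ?_ (herm_mem_kron_span T hT)
    rintro M ⟨B, C, hB, hC, rfl⟩
    exact hred B C hB hC
  obtain ⟨p, hp, q, hq, hpq⟩ := Submodule.mem_sup.mp hQ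
  obtain ⟨t, rfl⟩ := Submodule.mem_span_singleton.mp hq
  -- trace vanishes on P
  have htrP : p.trace = 0 := by
    have hle : P ≤ LinearMap.ker (Matrix.traceLinearMap (Fin n₁ × Fin n₂) ℝ ℂ) := by
      rw [hP]
      refine Submodule.span_le.mpr ?_
      rintro M (⟨B, C, hB, hB0, hC, rfl⟩ | ⟨B, C, hB, hC, hC0, rfl⟩)
      · simp [LinearMap.mem_ker, trace_kronecker, hB0]
      · simp [LinearMap.mem_ker, trace_kronecker, hC0]
    simpa using hle hp
  have htrE : E.trace = ((n₁ * n₂ : ℕ) : ℂ) := by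
    rw [hE, trace_kronecker, trace_one, trace_one]
    simp
  have ht : t = 0 := by
    have : (p + t • E).trace = 0 := hpq ▸ hTtr
    rw [trace_add, htrP, zero_add, trace_smul, htrE] at this
    have hne : ((n₁ * n₂ : ℕ) : ℂ) ≠ 0 := by
      exact_mod_cast Nat.cast_ne_zero.mpr (Nat.mul_ne_zero hn₁.ne' hn₂.ne')
    rcases smul_eq_zero.mp this with h | h
    · exact h
    · exact absurd h hne
  rw [← hpq, ht]
  simpa using hp
end

section
/- (Pure product states are negligible among pure states.) Suppose p ≥ 2 and all nᵢ ≥ 2, and let N = n₁⋯n_p. The set of pure product states — matrices A : Matrix I I ℂ that are tensor products ⊗ᵢ Bᵢ of rank-one density matrices Bᵢ on ℂ^{nᵢ} — has (2N−2)-dimensional Hausdorff measure zero in Matrix I I ℂ. Since the set of all pure states (rank-one density matrices on ℂ^N) is a manifold of real dimension 2N−2, the set of separable pure states has measure 0 in the set of pure states: a randomly picked pure state is entangled with probability 1. -/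
open scoped ComplexOrder
open MeasureTheory

instance {m : Type*} [Fintype m] :
    @BorelSpace (Matrix m m ℂ) PseudoMetricSpace.toUniformSpace.toTopologicalSpace _ := ⟨rfl⟩


noncomputable instance inst_s18 {m : Type*} [Fintype m] : NormedSpace ℝ (Matrix m m ℂ) :=
  Matrix.normedSpace

section Aux

open Module Set

/-- A rank-one matrix over `ℂ` has the form `v wᵀ`. -/
lemma matrix_rank_one_form {m : Type*} [Fintype m] [DecidableEq m] {B : Matrix m m ℂ}
    (h : B.rank = 1) : ∃ v w : m → ℂ, ∀ a b, B a b = v a * w b := by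
  rw [Matrix.rank] at h
  obtain ⟨v, -, hv⟩ := finrank_eq_one_iff'.mp h
  choose c hc using hv
  refine ⟨(v : m → ℂ),
    fun b => c ⟨B.mulVec (Pi.single b 1), ⟨Pi.single b 1, rfl⟩⟩, fun a b => ?_⟩
  set elem : LinearMap.range B.mulVecLin :=
    ⟨B.mulVec (Pi.single b 1), ⟨Pi.single b 1, rfl⟩⟩ with helem
  calc B a b = B.mulVec (Pi.single b 1) a := by simp
    _ = ((elem : m → ℂ)) a := rfl
    _ = ((c elem • v : LinearMap.range B.mulVecLin) : m → ℂ) a := by rw [hc elem]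
    _ = (v : m → ℂ) a * c elem := by simp [mul_comm]

variable {m : Type*} [Fintype m] [DecidableEq m]

/-- Extend a vector indexed by `{x // x ≠ c}` to all of `m`, putting `1` at `c`. -/
noncomputable def extCoord (c : m) (v : {x : m // x ≠ c} → ℂ) : m → ℂ :=
  fun a => if h : a = c then 1 else v ⟨a, h⟩

/-- Chart parametrizing pure states. -/
noncomputable def chart (c : m) (v : {x : m // x ≠ c} → ℂ) : Matrix m m ℂ :=
  fun a b => extCoord c v a * (starRingEnd ℂ) (extCoord c v b) /
    (∑ x, extCoord c v x * (starRingEnd ℂ) (extCoord c v x))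

lemma chart_covers {B : Matrix m m ℂ} (hB : IsPureDensityMatrix B) :
    ∃ c v, B = chart c v := by
  obtain ⟨⟨hpsd, htr⟩, hrk⟩ := hB
  have herm : ∀ a b, (starRingEnd ℂ) (B b a) = B a b := fun a b => hpsd.1.apply a b
  obtain ⟨v0, w0, hvw⟩ := matrix_rank_one_form hrk
  have htr' : ∑ x, B x x = 1 := htr
  have hex : ∃ c, B c c ≠ 0 := by
    by_contra hc
    push_neg at hc
    rw [Finset.sum_congr rfl fun x _ => hc x] at htr'
    simp at htr'
  obtain ⟨c, hc⟩ := hex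
  refine ⟨c, fun x => B x c / B c c, ?_⟩
  set u : m → ℂ := extCoord c fun x => B x.1 c / B c c with hu
  have hua : ∀ a, u a = B a c / B c c := by
    intro a
    by_cases h : a = c
    · subst h; simp [hu, extCoord, div_self hc]
    · simp [hu, extCoord, h]
  have hkey : ∀ a b, B a b * B c c = B a c * B c b := by
    intro a b; rw [hvw, hvw, hvw, hvw]; ring
  have hcc : (starRingEnd ℂ) (B c c) = B c c := herm c c
  have h1 : ∀ a b, u a * (starRingEnd ℂ) (u b) = B a b / B c c := by
    intro a b
    rw [hua, hua, map_div₀, herm c b, hcc, div_mul_div_comm]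
    rw [div_eq_div_iff (by exact mul_ne_zero hc hc) hc]
    linear_combination (-B c c) * hkey a b
  have h2 : (∑ x, u x * (starRingEnd ℂ) (u x)) = 1 / B c c := by
    rw [Finset.sum_congr rfl fun x _ => h1 x x, ← Finset.sum_div, htr']
  ext a b
  show B a b = u a * (starRingEnd ℂ) (u b) / (∑ x, u x * (starRingEnd ℂ) (u x))
  rw [h1, h2]
  field_simp

lemma contDiff_extCoord (c : m) (a : m) :
    ContDiff ℝ 1 (fun v : {x : m // x ≠ c} → ℂ => extCoord c v a) := by
  unfold extCoord
  by_cases h : a = c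
  · simp only [h, dif_pos]; exact contDiff_const
  · simp only [h, dif_neg, not_false_iff]
    exact (ContinuousLinearMap.proj (R := ℝ) (φ := fun _ : {x : m // x ≠ c} => ℂ)
      (⟨a, h⟩ : {x : m // x ≠ c})).contDiff

lemma contDiff_conj : ContDiff ℝ 1 (fun z : ℂ => (starRingEnd ℂ) z) :=
  Complex.conjCLE.contDiff

lemma denom_ne_zero (c : m) (v : {x : m // x ≠ c} → ℂ) :
    (∑ x, extCoord c v x * (starRingEnd ℂ) (extCoord c v x)) ≠ 0 := by
  have h : (∑ x, extCoord c v x * (starRingEnd ℂ) (extCoord c v x))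
      = ((∑ x, Complex.normSq (extCoord c v x) : ℝ) : ℂ) := by
    push_cast
    exact Finset.sum_congr rfl fun x _ => (Complex.mul_conj _)
  rw [h, Complex.ofReal_ne_zero]
  have h1 : Complex.normSq (extCoord c v c) = 1 := by simp [extCoord]
  have h2 : (1 : ℝ) ≤ ∑ x, Complex.normSq (extCoord c v x) := by
    rw [← h1]
    exact Finset.single_le_sum (fun x _ => Complex.normSq_nonneg _) (Finset.mem_univ c)
  linarith

lemma contDiff_chartEntry (c : m) (a b : m) :
    ContDiff ℝ 1 (fun v : {x : m // x ≠ c} → ℂ => chart c v a b) := by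
  unfold chart
  simp only [div_eq_mul_inv]
  exact ((contDiff_extCoord c a).mul (contDiff_conj.comp (contDiff_extCoord c b))).mul
    ((ContDiff.sum fun x _ =>
      (contDiff_extCoord c x).mul (contDiff_conj.comp (contDiff_extCoord c x))).inv
      (denom_ne_zero c))

lemma finrank_chartDomain (c : m) :
    finrank ℝ ({x : m // x ≠ c} → ℂ) = 2 * (Fintype.card m - 1) := by
  rw [finrank_pi_fintype ℝ]
  simp only [Complex.finrank_real_complex, Finset.sum_const, smul_eq_mul]
  simp [Finset.card_univ, Fintype.card_subtype_compl, Fintype.card_subtype_eq, mul_comm]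

/-- The global parametrization of pure product states with chart indices `c`. -/
noncomputable def Gmap {p : ℕ} (n : Fin p → ℕ) (c : ∀ i, Fin (n i))
    (v : ∀ i, ({x : Fin (n i) // x ≠ c i} → ℂ)) :
    Matrix (∀ i, Fin (n i)) (∀ i, Fin (n i)) ℂ :=
  prodMat n fun i => chart (c i) (v i)

lemma contDiff_Gmap {p : ℕ} (n : Fin p → ℕ) (c : ∀ i, Fin (n i)) :
    ContDiff ℝ 1 (Gmap n c) := by
  apply contDiff_pi.mpr
  intro x
  apply contDiff_pi.mpr
  intro y
  show ContDiff ℝ 1 fun v : (∀ i, ({x : Fin (n i) // x ≠ c i} → ℂ)) =>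
    ∏ i, chart (c i) (v i) (x i) (y i)
  exact contDiff_prod fun i _ =>
    (contDiff_chartEntry (c i) (x i) (y i)).comp
      ((ContinuousLinearMap.proj (R := ℝ)
        (φ := fun i => {x : Fin (n i) // x ≠ c i} → ℂ) i).contDiff)

lemma prod_aux1 {ι : Type*} (s : Finset ι) (f : ι → ℕ) (h : ∀ i ∈ s, 1 ≤ f i) :
    (∑ i ∈ s, (f i - 1)) + 1 ≤ ∏ i ∈ s, f i := by
  induction s using Finset.cons_induction with
  | empty => simp
  | cons a s ha ih =>
    rw [Finset.sum_cons, Finset.prod_cons]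
    have h1 := ih fun i hi => h i (Finset.mem_cons_of_mem hi)
    have h2 : 1 ≤ f a := h a (Finset.mem_cons_self a s)
    set S := ∑ i ∈ s, (f i - 1)
    set P := ∏ i ∈ s, f i
    calc f a - 1 + S + 1 ≤ f a + S := by omega
      _ ≤ f a + f a * S := by
          have : S ≤ f a * S := Nat.le_mul_of_pos_left _ h2
          omega
      _ = f a * (S + 1) := by ring
      _ ≤ f a * P := Nat.mul_le_mul_left _ h1

lemma prod_aux2 {p : ℕ} (hp : 2 ≤ p) (n : Fin p → ℕ) (hn : ∀ i, 2 ≤ n i) :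
    (∑ i, (n i - 1)) + 2 ≤ ∏ i, n i := by
  obtain ⟨q, rfl⟩ : ∃ q, p = q + 2 := ⟨p - 2, by omega⟩
  have h01 : (1 : Fin (q + 2)) ∈ Finset.univ.erase (0 : Fin (q + 2)) := by
    simp [Fin.ext_iff]
  have huniv : (Finset.univ : Finset (Fin (q + 2)))
      = Finset.cons 0 (Finset.univ.erase 0) (Finset.notMem_erase _ _) := by
    simp [Finset.cons_eq_insert, Finset.insert_erase]
  rw [huniv, Finset.sum_cons, Finset.prod_cons]
  set t := (Finset.univ : Finset (Fin (q + 2))).erase 0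
  have ht1 : ∀ i ∈ t, 1 ≤ n i := fun i _ => le_trans (by omega) (hn i)
  have hP := prod_aux1 t n ht1
  have hS1 : 1 ≤ ∑ i ∈ t, (n i - 1) := by
    calc 1 ≤ n 1 - 1 := by have := hn 1; omega
      _ ≤ ∑ i ∈ t, (n i - 1) :=
        Finset.single_le_sum (f := fun i => n i - 1) (fun i _ => Nat.zero_le _) h01
  set S := ∑ i ∈ t, (n i - 1)
  set P := ∏ i ∈ t, n i
  have hn0 : 2 ≤ n 0 := hn 0
  calc n 0 - 1 + S + 2 ≤ n 0 + 2 * S := by omega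
    _ ≤ n 0 + n 0 * S := by
        have : 2 * S ≤ n 0 * S := Nat.mul_le_mul_right _ hn0
        omega
    _ = n 0 * (S + 1) := by ring
    _ ≤ n 0 * P := Nat.mul_le_mul_left _ hP

end Aux

/-- for `p ≥ 2` particles each of dimension `nᵢ ≥ 2`, the set of pure product
states (tensor products of rank-one density matrices) has `(2N-2)`-dimensional Hausdorff
measure zero, `N = n₁⋯n_p`: a randomly picked pure state is entangled with probability 1. -/
theorem pure_product_states_measure_zero {p : ℕ} (hp : 2 ≤ p) (n : Fin p → ℕ)
    (hn : ∀ i, 2 ≤ n i) :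
    μH[2 * ((∏ i, n i : ℕ) : ℝ) - 2]
      {A : Matrix (∀ i, Fin (n i)) (∀ i, Fin (n i)) ℂ |
        ∃ B : ∀ i, Matrix (Fin (n i)) (Fin (n i)) ℂ,
          (∀ i, IsPureDensityMatrix (B i)) ∧ A = prodMat n B} = 0 := by
  classical
  set S : Set (Matrix (∀ i, Fin (n i)) (∀ i, Fin (n i)) ℂ) :=
    {A | ∃ B : ∀ i, Matrix (Fin (n i)) (Fin (n i)) ℂ,
      (∀ i, IsPureDensityMatrix (B i)) ∧ A = prodMat n B} with hS
  set N := ∏ i, n i with hNdef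
  have key := prod_aux2 hp n hn
  have hsum2 : 2 ≤ ∑ i, (n i - 1) := by
    calc 2 ≤ p := hp
      _ = ∑ _i : Fin p, 1 := by simp
      _ ≤ ∑ i, (n i - 1) := Finset.sum_le_sum fun i _ => by have := hn i; omega
  have hN4 : 4 ≤ N := by omega
  have hcover : S ⊆ ⋃ c : ∀ i, Fin (n i), Set.range (Gmap n c) := by
    rintro A ⟨B, hB, rfl⟩
    choose c v hcv using fun i => chart_covers (hB i)
    refine Set.mem_iUnion.mpr ⟨c, ⟨fun i => v i, ?_⟩⟩
    show prodMat n (fun i => chart (c i) (v i)) = prodMat n B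
    exact congrArg (prodMat n) (funext fun i => (hcv i).symm)
  have hdim : dimH S ≤ ((∑ i, 2 * (n i - 1) : ℕ) : ENNReal) := by
    refine le_trans (dimH_mono hcover) ?_
    rw [dimH_iUnion]
    refine iSup_le fun c => ?_
    refine le_trans (ContDiff.dimH_range_le (contDiff_Gmap n c)) ?_
    have hfr : Module.finrank ℝ (∀ i, ({x : Fin (n i) // x ≠ c i} → ℂ))
        = ∑ i, 2 * (n i - 1) := by
      rw [Module.finrank_pi_fintype ℝ]
      exact Finset.sum_congr rfl fun i _ => by
        rw [finrank_chartDomain (c i), Fintype.card_fin]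
    rw [hfr]
  have hlt : (∑ i, 2 * (n i - 1)) < 2 * N - 2 := by
    have h2 : ∑ i, 2 * (n i - 1) = 2 * ∑ i, (n i - 1) := by
      rw [Finset.mul_sum]
    omega
  have hdlt : dimH S < ((2 * N - 2 : ℕ) : NNReal) := by
    refine lt_of_le_of_lt hdim ?_
    have : ((∑ i, 2 * (n i - 1) : ℕ) : ENNReal) < ((2 * N - 2 : ℕ) : ENNReal) := by
      exact_mod_cast hlt
    simpa using this
  have hfinal := hausdorffMeasure_of_dimH_lt hdlt
  have hexp : 2 * ((∏ i, n i : ℕ) : ℝ) - 2 = (((2 * N - 2 : ℕ) : NNReal) : ℝ) := by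
    rw [NNReal.coe_natCast, Nat.cast_sub (by omega)]
    push_cast [hNdef]
    ring
  rw [hexp]
  exact hfinal
end
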